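/- arXiv:math/0210219 — 2 statements merged into one kernel-verified Lean document; each statement's English description precedes it below -/
import Mathlib

section
/- Let Γ be an even lattice of signature (3, b−3) with b ≥ 4 such that Γ contains a hyperbolic-plane sublattice and every primitive isotropic element of Γ is contained in a hyperbolic-plane sublattice. Then for every m ∈ ℤ the set {[x] ∈ Q : there exists a primitive α ∈ Γ with α² = 2m and ⟨x, α⟩ = 0} is dense in the period domain Q of Γ_ℝ. -/
/-!
Write a period as `z = x + i y`, so that `x, y` span a positive definite plane `P`. As the
positive index is `3` and `Γ` contains an isotropic vector `v`, the complement `P^⊥` contains a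
real isotropic vector `β` with `⟨v, β⟩ ≠ 0`. Such a `β` is a limit of real multiples of primitive
isotropic lattice vectors: for integral `c` close to a multiple of `β`, the integral vector
`c² v - 2⟨v, c⟩ c` is isotropic and close to a multiple of `β`. A primitive isotropic `e` lies in
a hyperbolic plane `⟨e, e'⟩`; for `w ⊥ e, e'` with `w² = 2s ≠ 0`, the vectors
`k w + (m - k² s) e + e'` are primitive of square `2m` and, divided by `m - k² s`, tend to `e`.
So `β` is a limit of multiples of primitive `α` with `α² = 2m`. Projecting `x, y` to `α^⊥` along a
fixed vector and restoring `x² = y²`, `⟨x, y⟩ = 0` inside their span gives periods orthogonal to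
`α` that tend to `z`.
-/

open Matrix
open scoped LinearAlgebra.Projectivization

/-- The quotient topology on a projectivization. -/
noncomputable instance projTopology {K V : Type*} [DivisionRing K] [AddCommGroup V]
    [Module K V] [TopologicalSpace V] : TopologicalSpace (ℙ K V) :=
  inferInstanceAs (TopologicalSpace (Quotient (projectivizationSetoid K V)))

/-- The ℤ-valued bilinear form of the lattice `Γ = ℤ^n` with Gram matrix `G`. -/
def formZ {n : ℕ} (G : Matrix (Fin n) (Fin n) ℤ) (x y : Fin n → ℤ) : ℤ :=
  x ⬝ᵥ (G *ᵥ y)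

/-- The induced real bilinear form on `Γ_ℝ = ℝ^n`. -/
noncomputable def formR {n : ℕ} (G : Matrix (Fin n) (Fin n) ℤ) (x y : Fin n → ℝ) : ℝ :=
  x ⬝ᵥ ((G.map ((↑) : ℤ → ℝ)) *ᵥ y)

/-- The ℂ-bilinear extension of the form to `(Γ_ℝ)_ℂ = ℂ^n`. -/
noncomputable def formC {n : ℕ} (G : Matrix (Fin n) (Fin n) ℤ) (x y : Fin n → ℂ) : ℂ :=
  x ⬝ᵥ ((G.map ((↑) : ℤ → ℂ)) *ᵥ y)

/-- `x ∈ Γ` is primitive: `x ≠ 0` and `x = m • y` implies `m = ±1`. -/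
def IsPrimitive {n : ℕ} (x : Fin n → ℤ) : Prop :=
  x ≠ 0 ∧ ∀ (m : ℤ) (y : Fin n → ℤ), x = m • y → m = 1 ∨ m = -1

/-- The period domain `Q ⊂ ℙ((Γ_ℝ)_ℂ)`. -/
def periodDomain {n : ℕ} (G : Matrix (Fin n) (Fin n) ℤ) : Set (ℙ ℂ (Fin n → ℂ)) :=
  {p | ∃ (z : Fin n → ℂ) (hz : z ≠ 0), p = Projectivization.mk ℂ z hz ∧
    formC G z z = 0 ∧ 0 < (formC G (z + star z) (z + star z)).re}

namespace LinearMap.BilinForm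

open Module Submodule

section Field

variable {K V : Type*} [Field K] [AddCommGroup V] [Module K V] {B : LinearMap.BilinForm K V}

lemma mem_orthogonal_sup_span_singleton {S : Submodule K V} {x y : V} :
    y ∈ B.orthogonal (S ⊔ K ∙ x) ↔ y ∈ B.orthogonal S ∧ B x y = 0 := by
  simp only [mem_orthogonal_iff, mem_sup, mem_span_singleton]
  refine ⟨fun h => ⟨fun s hs => ?_, ?_⟩, ?_⟩
  · simpa using h s ⟨s, hs, 0, ⟨0, zero_smul K x⟩, add_zero s⟩
  · simpa using h x ⟨0, S.zero_mem, x, ⟨1, one_smul K x⟩, zero_add x⟩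
  · rintro ⟨hS, hx⟩ _ ⟨s, hs, _, ⟨c, rfl⟩, rfl⟩
    simp [hS s hs, hx]

lemma exists_mem_orthogonal_apply_ne_zero [FiniteDimensional K V] (hB : B.Nondegenerate)
    (hBr : B.IsRefl) {S : Submodule K V} {w : V} (hw : w ∉ S) :
    ∃ u ∈ B.orthogonal S, B u w ≠ 0 := by
  rw [← orthogonal_orthogonal hB hBr S] at hw
  simpa [mem_orthogonal_iff] using hw

lemma finrank_sup_span_singleton_le [FiniteDimensional K V] (S : Submodule K V) (x : V) :
    finrank K ↥(S ⊔ K ∙ x) ≤ finrank K S + 1 := by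
  by_cases hx : x ∈ S
  · rw [sup_eq_left.mpr ((span_singleton_le_iff_mem x S).mpr hx)]
    omega
  · rw [finrank_sup_span_singleton hx]

end Field

variable {V : Type*} [AddCommGroup V] [Module ℝ V] {B : LinearMap.BilinForm ℝ V}

def IsPosDefOn (B : LinearMap.BilinForm ℝ V) (S : Submodule ℝ V) : Prop :=
  ∀ x ∈ S, x ≠ 0 → 0 < B x x

lemma isPosDefOn_bot : B.IsPosDefOn ⊥ := fun _ hx hx0 => absurd ((mem_bot ℝ).mp hx) hx0

lemma IsPosDefOn.sup_span_singleton (hB : B.IsSymm) {S : Submodule ℝ V} (hS : B.IsPosDefOn S)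
    {p : V} (hp : p ∈ B.orthogonal S) (hpp : 0 < B p p) : B.IsPosDefOn (S ⊔ ℝ ∙ p) := by
  intro x hx hx0
  obtain ⟨s, hs, _, hy, rfl⟩ := mem_sup.mp hx
  obtain ⟨c, rfl⟩ := mem_span_singleton.mp hy
  have hsp : B s p = 0 := hp s hs
  have hps : B p s = 0 := by rw [hB.eq]; exact hsp
  have hq : B (s + c • p) (s + c • p) = B s s + c ^ 2 * B p p := by
    simp only [map_add, map_smul, LinearMap.add_apply, LinearMap.smul_apply, smul_eq_mul,
      hsp, hps]
    ring
  rw [hq]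
  rcases eq_or_ne s 0 with rfl | hs0
  · have hc : c ≠ 0 := by rintro rfl; simp at hx0
    simp only [map_zero, zero_add]
    positivity
  · have := hS s hs hs0
    positivity

lemma notMem_of_mem_orthogonal {S : Submodule ℝ V} {p : V} (hp : p ∈ B.orthogonal S)
    (hpp : B p p ≠ 0) : p ∉ S := fun h => hpp (hp p h)

lemma exists_pos_mem_orthogonal [FiniteDimensional ℝ V] (hB : B.IsRefl) {F S : Submodule ℝ V}
    (hF : B.IsPosDefOn F) (hSF : finrank ℝ S < finrank ℝ F) :
    ∃ x ∈ B.orthogonal S, 0 < B x x := by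
  have h1 := finrank_add_finrank_orthogonal hB S
  have h2 := finrank_sup_add_finrank_inf_eq F (B.orthogonal S)
  have h3 := (F ⊔ B.orthogonal S).finrank_le
  obtain ⟨⟨x, hx⟩, hx0⟩ :=
    finrank_pos_iff_exists_ne_zero.mp (show 0 < finrank ℝ ↥(F ⊓ B.orthogonal S) by omega)
  exact ⟨x, (mem_inf.mp hx).2, hF x (mem_inf.mp hx).1 (by simpa using hx0)⟩

lemma neg_of_mem_orthogonal [FiniteDimensional ℝ V] (hB : B.IsSymm) (hBn : B.Nondegenerate)
    {S : Submodule ℝ V} (hS : B.IsPosDefOn S)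
    (hmax : ∀ F : Submodule ℝ V, B.IsPosDefOn F → finrank ℝ F ≤ finrank ℝ S)
    {u : V} (hu : u ∈ B.orthogonal S) (hu0 : u ≠ 0) : B u u < 0 := by
  have not_pos : ∀ w ∈ B.orthogonal S, ¬ 0 < B w w := fun w hw hpos => by
    have := hmax _ (hS.sup_span_singleton hB hw hpos)
    rw [finrank_sup_span_singleton (notMem_of_mem_orthogonal hw hpos.ne')] at this
    omega
  refine (not_lt.mp (not_pos u hu)).lt_of_ne fun huu => ?_
  obtain ⟨t, ht, htu⟩ :=
    exists_mem_orthogonal_apply_ne_zero hBn hB.isRefl fun huS => (hS u huS hu0).ne' huu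
  -- `t + τ • u` stays in the orthogonal complement and, `u` being isotropic, has square `1`
  set τ := (1 - B t t) / (2 * B t u)
  refine not_pos (t + τ • u) (add_mem ht (smul_mem _ τ hu)) ?_
  have hq : B (t + τ • u) (t + τ • u) = 1 := by
    simp only [map_add, map_smul, LinearMap.add_apply, LinearMap.smul_apply, smul_eq_mul,
      huu, hB.eq u t, τ]
    field_simp
    ring
  rw [hq]
  exact one_pos

lemma exists_isotropic_mem_apply_ne_zero (hB : B.IsSymm) {K : Submodule ℝ V} {p u v : V}
    (hp : p ∈ K) (hu : u ∈ K) (hpp : 0 < B p p) (huu : B u u < 0) (hpu : B p u = 0)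
    (hvu : B v u ≠ 0) : ∃ β ∈ K, B β β = 0 ∧ B v β ≠ 0 := by
  -- the two isotropic vectors `√(-u²) p ± √(p²) u` pair with `v` to values differing by
  -- `2 √(p²) ⟨v, u⟩ ≠ 0`
  set a := √(B p p)
  set c := √(-B u u)
  have ha : a ^ 2 = B p p := Real.sq_sqrt hpp.le
  have hc : c ^ 2 = -B u u := Real.sq_sqrt (by linarith)
  have ha0 : a ≠ 0 := (Real.sqrt_pos.mpr hpp).ne'
  have hup : B u p = 0 := by rw [hB.eq]; exact hpu
  set β : ℝ → V := fun ε => c • p + (ε * a) • u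
  have hβK : ∀ ε, β ε ∈ K := fun ε => add_mem (smul_mem _ _ hp) (smul_mem _ _ hu)
  have hββ : ∀ ε : ℝ, ε ^ 2 = 1 → B (β ε) (β ε) = 0 := fun ε hε => by
    simp only [β, map_add, map_smul, LinearMap.add_apply, LinearMap.smul_apply, smul_eq_mul,
      hpu, hup]
    linear_combination B p p * hc + B u u * ε ^ 2 * ha + B u u * B p p * hε
  by_contra! h
  have h1 := h (β 1) (hβK 1) (hββ 1 (by norm_num))
  have h2 := h (β (-1)) (hβK (-1)) (hββ (-1) (by norm_num))
  simp only [β, map_add, map_smul, smul_eq_mul] at h1 h2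
  have h3 : a * B v u = 0 := by linear_combination (h1 - h2) / 2
  exact hvu ((mul_eq_zero.mp h3).resolve_left ha0)

lemma exists_isotropic_mem_orthogonal_apply_ne_zero [FiniteDimensional ℝ V] (hB : B.IsSymm)
    (hBn : B.Nondegenerate) {F S : Submodule ℝ V} (hF : B.IsPosDefOn F)
    (hmax : ∀ F' : Submodule ℝ V, B.IsPosDefOn F' → finrank ℝ F' ≤ finrank ℝ F)
    (hS : B.IsPosDefOn S) (hSF : finrank ℝ S + 1 = finrank ℝ F) {v : V} (hv0 : v ≠ 0)
    (hvv : B v v = 0) : ∃ β ∈ B.orthogonal S, B β β = 0 ∧ B v β ≠ 0 := by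
  obtain ⟨p, hp, hpp⟩ := exists_pos_mem_orthogonal (S := S) hB.isRefl hF (by omega)
  have hS' := hS.sup_span_singleton hB hp hpp
  have hrank : finrank ℝ ↥(S ⊔ ℝ ∙ p) = finrank ℝ F := by
    rw [finrank_sup_span_singleton (notMem_of_mem_orthogonal hp hpp.ne'), hSF]
  obtain ⟨u, hu, huv⟩ := exists_mem_orthogonal_apply_ne_zero hBn hB.isRefl
    fun hv => (hS' v hv hv0).ne' hvv
  obtain ⟨huS, hpu⟩ := mem_orthogonal_sup_span_singleton.mp hu
  have huu := neg_of_mem_orthogonal hB hBn hS' (hrank ▸ hmax) hu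
    fun hu0 => huv (by simp [hu0])
  exact exists_isotropic_mem_apply_ne_zero hB hp huS hpp huu hpu (by rwa [hB.eq])

end LinearMap.BilinForm

namespace PeriodDensity

open Module Submodule LinearMap.BilinForm Filter Topology

section QuadraticSpace

variable {V : Type*} [AddCommGroup V] [Module ℝ V]

def IsPeriodPair (B : LinearMap.BilinForm ℝ V) (x y : V) : Prop :=
  0 < B x x ∧ B y y = B x x ∧ B x y = 0

lemma isPosDefOn_periodPlane [FiniteDimensional ℝ V] {B : LinearMap.BilinForm ℝ V}
    (hB : B.IsSymm) {x y : V} (h : IsPeriodPair B x y) :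
    B.IsPosDefOn (⊥ ⊔ ℝ ∙ x ⊔ ℝ ∙ y) ∧ finrank ℝ ↥(⊥ ⊔ ℝ ∙ x ⊔ ℝ ∙ y) = 2 := by
  obtain ⟨hxx, hyy, hxy⟩ := h
  have hx : x ∈ B.orthogonal ⊥ := by simp
  have hy : y ∈ B.orthogonal (⊥ ⊔ ℝ ∙ x) := mem_orthogonal_sup_span_singleton.mpr ⟨by simp, hxy⟩
  refine ⟨(isPosDefOn_bot.sup_span_singleton hB hx hxx).sup_span_singleton hB hy (hyy ▸ hxx), ?_⟩
  rw [finrank_sup_span_singleton (notMem_of_mem_orthogonal hy (hyy ▸ hxx).ne'),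
    finrank_sup_span_singleton (notMem_of_mem_orthogonal hx hxx.ne'), finrank_bot]

variable (B : LinearMap.BilinForm ℝ V)

noncomputable def projAlong (γ b x : V) : V := x - (B x b / B γ b) • γ

noncomputable def partner (x y : V) : V :=
  √(B x x / (B y y - B x y ^ 2 / B x x)) • (y - (B x y / B x x) • x)

-- project `x, y` to `b^⊥` along `γ`, then restore the period relations within their span
noncomputable def perturb (γ x y b : V) : V × V :=
  (projAlong B γ b x, partner B (projAlong B γ b x) (projAlong B γ b y))

variable {B}

lemma projAlong_apply_eq_zero {γ b : V} (hγb : B γ b ≠ 0) (x : V) :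
    B (projAlong B γ b x) b = 0 := by
  simp only [projAlong, map_sub, map_smul, LinearMap.sub_apply, LinearMap.smul_apply,
    smul_eq_mul]
  field_simp
  ring

lemma projAlong_of_apply_eq_zero (γ : V) {b x : V} (hxb : B x b = 0) :
    projAlong B γ b x = x := by
  simp [projAlong, hxb]

lemma partner_of_isPeriodPair {x y : V} (h : IsPeriodPair B x y) : partner B x y = y := by
  obtain ⟨hxx, hyy, hxy⟩ := h
  simp [partner, hxy, hyy, hxx.ne']

lemma isPeriodPair_partner (hB : B.IsSymm) {x y : V} (hxx : 0 < B x x)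
    (hE : 0 < B y y - B x y ^ 2 / B x x) : IsPeriodPair B x (partner B x y) := by
  have hT := Real.sq_sqrt (div_pos hxx hE).le
  have hE' : B x x * B y y - B x y ^ 2 ≠ 0 := by
    have := mul_pos hxx hE
    field_simp at this
    exact this.ne'
  unfold partner
  set T := √(B x x / (B y y - B x y ^ 2 / B x x))
  clear_value T
  field_simp at hT
  refine ⟨hxx, ?_, ?_⟩
  · simp only [map_smul, map_sub, LinearMap.smul_apply, LinearMap.sub_apply, smul_eq_mul,
      hB.eq y x]
    field_simp
    linear_combination hT
  · simp only [map_smul, map_sub, smul_eq_mul]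
    field_simp
    ring

lemma partner_apply_eq_zero {x y b : V} (hx : B x b = 0) (hy : B y b = 0) :
    B (partner B x y) b = 0 := by
  simp [partner, hx, hy]

end QuadraticSpace

variable {n : ℕ} (G : Matrix (Fin n) (Fin n) ℤ)

noncomputable def realForm : LinearMap.BilinForm ℝ (Fin n → ℝ) :=
  Matrix.toLinearMap₂' ℝ (G.map ((↑) : ℤ → ℝ))

def intForm : LinearMap.BilinForm ℤ (Fin n → ℤ) := Matrix.toLinearMap₂' ℤ G

lemma formR_eq_realForm (x y : Fin n → ℝ) : formR G x y = realForm G x y :=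
  (Matrix.toLinearMap₂'_apply' _ _ _).symm

lemma formZ_eq_intForm (a b : Fin n → ℤ) : formZ G a b = intForm G a b :=
  (Matrix.toLinearMap₂'_apply' _ _ _).symm

variable {G}

lemma intForm_isSymm (hsymm : G.IsSymm) : (intForm G).IsSymm :=
  ⟨fun a b => by
    simp only [← formZ_eq_intForm, formZ]
    rw [Matrix.dotProduct_mulVec, ← Matrix.mulVec_transpose, hsymm.eq, dotProduct_comm]⟩

lemma realForm_isSymm (hsymm : G.IsSymm) : (realForm G).IsSymm :=
  ⟨fun x y => by
    simp only [← formR_eq_realForm, formR]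
    rw [Matrix.dotProduct_mulVec, ← Matrix.mulVec_transpose, (hsymm.map _).eq,
      dotProduct_comm]⟩

lemma realForm_nondegenerate (hdet : (G.map ((↑) : ℤ → ℝ)).det ≠ 0) :
    (realForm G).Nondegenerate :=
  (Matrix.nondegenerate_of_det_ne_zero hdet).toLinearMap₂'

@[fun_prop]
lemma _root_.Continuous.realForm {X : Type*} [TopologicalSpace X] {f g : X → Fin n → ℝ}
    (hf : Continuous f) (hg : Continuous g) : Continuous fun x => realForm G (f x) (g x) := by
  simp only [← formR_eq_realForm, formR]
  fun_prop

@[fun_prop]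
lemma _root_.ContinuousAt.realForm {X : Type*} [TopologicalSpace X] {f g : X → Fin n → ℝ}
    {x₀ : X} (hf : ContinuousAt f x₀) (hg : ContinuousAt g x₀) :
    ContinuousAt (fun x => PeriodDensity.realForm G (f x) (g x)) x₀ := by
  have h : Continuous fun p : (Fin n → ℝ) × (Fin n → ℝ) => PeriodDensity.realForm G p.1 p.2 :=
    continuous_fst.realForm continuous_snd
  exact h.continuousAt.comp (f := fun x => (f x, g x)) (hf.prodMk hg)

def toReal (a : Fin n → ℤ) : Fin n → ℝ := fun i => a i

@[simp] lemma toReal_zero : toReal (0 : Fin n → ℤ) = 0 := by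
  ext; simp [toReal]

@[simp] lemma toReal_add (a b : Fin n → ℤ) : toReal (a + b) = toReal a + toReal b := by
  ext; simp [toReal]

@[simp] lemma toReal_sub (a b : Fin n → ℤ) : toReal (a - b) = toReal a - toReal b := by
  ext; simp [toReal]

@[simp] lemma toReal_smul (c : ℤ) (a : Fin n → ℤ) : toReal (c • a) = (c : ℝ) • toReal a := by
  ext; simp [toReal]

lemma toReal_injective : Function.Injective (toReal : (Fin n → ℤ) → Fin n → ℝ) :=
  fun a b h => funext fun i => by simpa [toReal] using congrFun h i

@[simp] lemma toReal_eq_zero {a : Fin n → ℤ} : toReal a = 0 ↔ a = 0 :=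
  toReal_injective.eq_iff' toReal_zero

lemma realForm_toReal (a b : Fin n → ℤ) : realForm G (toReal a) (toReal b) = intForm G a b := by
  simp only [← formR_eq_realForm, ← formZ_eq_intForm, formR, formZ, dotProduct, Matrix.mulVec,
    Matrix.map_apply, toReal]
  push_cast
  rfl

lemma isPrimitive_of_intForm_eq_one {a v : Fin n → ℤ} (h : intForm G a v = 1) :
    IsPrimitive a := by
  refine ⟨fun ha => by simp [ha] at h, fun c y hcy => ?_⟩
  rw [hcy, map_smul, LinearMap.smul_apply, smul_eq_mul] at h
  exact Int.eq_one_or_neg_one_of_mul_eq_one h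

lemma exists_eq_smul_isPrimitive {a : Fin n → ℤ} (ha : a ≠ 0) :
    ∃ d : ℤ, d ≠ 0 ∧ ∃ e, IsPrimitive e ∧ a = d • e := by
  have hne : (Finset.univ : Finset (Fin n)).Nonempty :=
    Finset.univ_nonempty_iff.mpr ⟨(Function.ne_iff.mp ha).choose⟩
  obtain ⟨e, hae, he⟩ := Finset.extract_gcd a hne
  have hae : a = Finset.univ.gcd a • e := funext fun i => hae i (Finset.mem_univ i)
  refine ⟨_, fun hd => ha (by rw [hae, hd, zero_smul]), e,
    ⟨fun he0 => ha (by rw [hae, he0, smul_zero]), fun c y hey => ?_⟩, hae⟩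
  have hc : c ∣ 1 := he ▸ Finset.dvd_gcd fun i _ => ⟨y i, congrFun hey i⟩
  exact Int.isUnit_iff.mp (isUnit_of_dvd_one hc)

variable (G) in
def primitiveRays (m : ℤ) : Set (Fin n → ℝ) :=
  {x | ∃ α, IsPrimitive α ∧ intForm G α α = 2 * m ∧ ∃ c : ℝ, c ≠ 0 ∧ x = c • toReal α}

lemma smul_mem_primitiveRays {m : ℤ} {x : Fin n → ℝ} (hx : x ∈ primitiveRays G m) {c : ℝ}
    (hc : c ≠ 0) : c • x ∈ primitiveRays G m := by
  obtain ⟨α, hα, hαα, d, hd, rfl⟩ := hx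
  exact ⟨α, hα, hαα, c * d, mul_ne_zero hc hd, smul_smul c d _⟩

lemma smul_mem_closure_primitiveRays {m : ℤ} {x : Fin n → ℝ}
    (hx : x ∈ closure (primitiveRays G m)) {c : ℝ} (hc : c ≠ 0) :
    c • x ∈ closure (primitiveRays G m) :=
  map_mem_closure (continuous_const_smul c) hx fun _ hy => smul_mem_primitiveRays hy hc

lemma smul_toReal_mem_primitiveRays_zero {a : Fin n → ℤ} (ha : a ≠ 0)
    (haa : intForm G a a = 0) {c : ℝ} (hc : c ≠ 0) : c • toReal a ∈ primitiveRays G 0 := by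
  obtain ⟨d, hd, e, he, rfl⟩ := exists_eq_smul_isPrimitive ha
  have hee : intForm G e e = 0 := by
    have : d * (d * intForm G e e) = 0 := by
      simpa only [map_smul, LinearMap.smul_apply, smul_eq_mul] using haa
    simpa [hd] using this
  exact ⟨e, he, by rw [hee, mul_zero], c * d, mul_ne_zero hc (by exact_mod_cast hd),
    by rw [toReal_smul, smul_smul]⟩

lemma toReal_mem_closure_primitiveRays (hsymm : G.IsSymm) {e e' w : Fin n → ℤ}
    (he : intForm G e e = 0) (he' : intForm G e' e' = 0) (hee' : intForm G e e' = 1)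
    (hwe : intForm G w e = 0) (hwe' : intForm G w e' = 0) {s : ℤ} (hs : s ≠ 0)
    (hww : intForm G w w = 2 * s) (m : ℤ) :
    toReal e ∈ closure (primitiveRays G m) := by
  -- `α k` pairs to `1` with `e`, hence is primitive, and `(m - k² s)⁻¹ α k → e`
  set α : ℕ → Fin n → ℤ := fun k => (k : ℤ) • w + (m - (k : ℤ) ^ 2 * s) • e + e'
  set lam : ℕ → ℝ := fun k => m - (k : ℝ) ^ 2 * s
  have hZ := intForm_isSymm hsymm
  have hαα : ∀ k, intForm G (α k) (α k) = 2 * m := fun k => by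
    simp only [α, map_add, map_smul, LinearMap.add_apply, LinearMap.smul_apply, smul_eq_mul,
      he, he', hee', hwe, hwe', hww, hZ.eq e w, hZ.eq e' w, hZ.eq e' e]
    ring
  have hαe : ∀ k, intForm G (α k) e = 1 := fun k => by
    simp only [α, map_add, map_smul, LinearMap.add_apply, LinearMap.smul_apply, smul_eq_mul,
      he, hwe, hZ.eq e' e, hee']
    ring
  have hsq : Tendsto (fun k : ℕ => (k : ℝ) ^ 2) atTop atTop :=
    (tendsto_pow_atTop two_ne_zero).comp tendsto_natCast_atTop_atTop
  have hlim : Tendsto (fun k : ℕ => lam k / (k : ℝ) ^ 2) atTop (𝓝 (-s)) := by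
    have := (hsq.inv_tendsto_atTop.const_mul (m : ℝ)).sub_const (s : ℝ)
    rw [mul_zero, zero_sub] at this
    refine this.congr' ((eventually_ne_atTop 0).mono fun k hk => ?_)
    simp only [Pi.inv_apply, lam]
    field_simp
  have hs' : (-s : ℝ) ≠ 0 := by exact_mod_cast neg_ne_zero.mpr hs
  have hev : ∀ᶠ k : ℕ in atTop, k ≠ 0 ∧ lam k ≠ 0 :=
    (eventually_ne_atTop 0).and ((hlim.eventually_ne hs').mono fun k hk hl => hk (by simp [hl]))
  have hsmall : Tendsto (fun k : ℕ => (k : ℝ)⁻¹ • toReal w + ((k : ℝ) ^ 2)⁻¹ • toReal e')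
      atTop (𝓝 0) := by
    simpa only [zero_smul, add_zero, Function.comp_def, Pi.inv_apply] using
      ((tendsto_inv_atTop_zero.comp (tendsto_natCast_atTop_atTop (R := ℝ))).smul_const
        (toReal w)).add (hsq.inv_tendsto_atTop.smul_const (toReal e'))
  have htend := (tendsto_const_nhds (x := toReal e)).add ((hlim.inv₀ hs').smul hsmall)
  rw [smul_zero, add_zero] at htend
  refine mem_closure_of_tendsto (htend.congr' (hev.mono fun k ⟨hk, hl⟩ => ?_))
    (hev.mono fun k ⟨_, hl⟩ => ⟨α k, isPrimitive_of_intForm_eq_one (hαe k), hαα k, (lam k)⁻¹,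
      inv_ne_zero hl, rfl⟩)
  have hk' : (k : ℝ) ≠ 0 := Nat.cast_ne_zero.mpr hk
  have hlam : ((m - (k : ℤ) ^ 2 * s : ℤ) : ℝ) = lam k := by push_cast; rfl
  simp only [α, toReal_add, toReal_smul, hlam, smul_add, smul_smul]
  match_scalars <;> field_simp

lemma realForm_self_eq_zero_of_forall_intForm (hsymm : G.IsSymm) {e e' : Fin n → ℤ}
    (he : intForm G e e = 0) (he' : intForm G e' e' = 0) (hee' : intForm G e e' = 1)
    (h : ∀ w, intForm G w e = 0 → intForm G w e' = 0 → intForm G w w = 0) {x : Fin n → ℝ}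
    (hex : realForm G (toReal e) x = 0) (he'x : realForm G (toReal e') x = 0) :
    realForm G x x = 0 := by
  set B := realForm G
  -- the integral projection `π` onto the orthogonal complement of `e, e'` has isotropic image
  -- by polarization, hence so does its real extension `πR`, which fixes `x`
  set π : (Fin n → ℤ) → (Fin n → ℤ) := fun a => a - intForm G a e' • e - intForm G a e • e'
  have hπe : ∀ a, intForm G (π a) e = 0 := fun a => by
    simp only [π, map_sub, map_smul, LinearMap.sub_apply, LinearMap.smul_apply, smul_eq_mul, he,
      (intForm_isSymm hsymm).eq e' e, hee']
    ring
  have hπe' : ∀ a, intForm G (π a) e' = 0 := fun a => by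
    simp only [π, map_sub, map_smul, LinearMap.sub_apply, LinearMap.smul_apply, smul_eq_mul, he',
      hee']
    ring
  have hππ : ∀ a b, intForm G (π a) (π b) = 0 := fun a b => by
    have hab := h (π a + π b) (by simp [hπe]) (by simp [hπe'])
    simp only [map_add, LinearMap.add_apply, h (π a) (hπe a) (hπe' a),
      h (π b) (hπe b) (hπe' b), (intForm_isSymm hsymm).eq (π b) (π a)] at hab
    omega
  set πR : (Fin n → ℝ) →ₗ[ℝ] Fin n → ℝ := LinearMap.id - (B.flip (toReal e')).smulRight
    (toReal e) - (B.flip (toReal e)).smulRight (toReal e')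
  have hπR : ∀ a, πR (toReal a) = toReal (π a) := fun a => by
    simp only [πR, π, B, LinearMap.sub_apply, LinearMap.id_apply, LinearMap.smulRight_apply,
      LinearMap.BilinForm.flip_apply, realForm_toReal, toReal_sub, toReal_smul]
  have hΦ : B.compl₁₂ πR πR = 0 := by
    refine LinearMap.ext_basis (Pi.basisFun ℝ (Fin n)) (Pi.basisFun ℝ (Fin n)) fun i j => ?_
    have hstd : ∀ i, Pi.basisFun ℝ (Fin n) i = toReal (Pi.single i 1) := fun i => by
      ext j; simp [toReal, Pi.single_apply]
    simp [hstd, hπR, B, realForm_toReal, hππ]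
  have hπx : πR x = x := by
    simp only [πR, LinearMap.sub_apply, LinearMap.id_apply, LinearMap.smulRight_apply,
      LinearMap.BilinForm.flip_apply, B, (realForm_isSymm hsymm).eq x, hex, he'x, zero_smul,
      sub_zero]
  simpa [hπx] using LinearMap.congr_fun₂ hΦ x x

lemma exists_intForm_orthogonal_ne_zero (hsymm : G.IsSymm) {F : Submodule ℝ (Fin n → ℝ)}
    (hF : (realForm G).IsPosDefOn F) (hF2 : 2 < finrank ℝ F) {e e' : Fin n → ℤ}
    (he : intForm G e e = 0) (he' : intForm G e' e' = 0) (hee' : intForm G e e' = 1) :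
    ∃ w, intForm G w e = 0 ∧ intForm G w e' = 0 ∧ intForm G w w ≠ 0 := by
  have hS : finrank ℝ ↥(⊥ ⊔ ℝ ∙ toReal e ⊔ ℝ ∙ toReal e') < finrank ℝ F := by
    have h1 := finrank_sup_span_singleton_le (⊥ ⊔ ℝ ∙ toReal e) (toReal e')
    have h2 := finrank_sup_span_singleton_le (⊥ : Submodule ℝ (Fin n → ℝ)) (toReal e)
    rw [finrank_bot] at h2
    omega
  obtain ⟨x, hx, hxx⟩ := exists_pos_mem_orthogonal (realForm_isSymm hsymm).isRefl hF hS
  obtain ⟨⟨-, hex⟩, he'x⟩ :=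
    (mem_orthogonal_sup_span_singleton.mp hx).imp_left mem_orthogonal_sup_span_singleton.mp
  by_contra! h
  exact hxx.ne' (realForm_self_eq_zero_of_forall_intForm hsymm he he' hee' h hex he'x)

lemma tendsto_inv_smul_toReal_floor (β : Fin n → ℝ) :
    Tendsto (fun k : ℕ => (k : ℝ)⁻¹ • toReal fun i => ⌊(k : ℝ) * β i⌋) atTop (𝓝 β) := by
  refine tendsto_pi_nhds.mpr fun i => ?_
  have hinv : Tendsto (fun k : ℕ => (k : ℝ)⁻¹) atTop (𝓝 0) :=
    tendsto_inv_atTop_zero.comp tendsto_natCast_atTop_atTop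
  have hfract : Tendsto (fun k : ℕ => (k : ℝ)⁻¹ * Int.fract ((k : ℝ) * β i)) atTop (𝓝 0) :=
    squeeze_zero (fun k => by positivity)
      (fun k => mul_le_of_le_one_right (by positivity) (Int.fract_lt_one _).le) hinv
  have := (tendsto_const_nhds (x := β i)).sub hfract
  rw [sub_zero] at this
  refine this.congr' ((eventually_ne_atTop 0).mono fun k hk => ?_)
  have hk' : (k : ℝ) ≠ 0 := Nat.cast_ne_zero.mpr hk
  simp only [Pi.smul_apply, toReal, smul_eq_mul, Int.fract]
  field_simp
  ring

lemma mem_closure_primitiveRays_zero (hsymm : G.IsSymm) {v : Fin n → ℤ}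
    (hv : intForm G v v = 0) {β : Fin n → ℝ} (hββ : realForm G β β = 0)
    (hvβ : realForm G (toReal v) β ≠ 0) : β ∈ closure (primitiveRays G 0) := by
  set B := realForm G
  -- `R p` is isotropic, `R β = β`, and `R (k⁻¹ c)` for integral `c` is a multiple of the
  -- integral isotropic vector `c² v - 2 ⟨v, c⟩ c`
  set R : (Fin n → ℝ) → Fin n → ℝ := fun p => p - (B p p / (2 * B (toReal v) p)) • toReal v
  set c : ℕ → Fin n → ℤ := fun k i => ⌊(k : ℝ) * β i⌋
  set p : ℕ → Fin n → ℝ := fun k => (k : ℝ)⁻¹ • toReal (c k)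
  have hR : ContinuousAt R β := by fun_prop (disch := simpa using hvβ)
  have hRβ : R β = β := by simp [R, hββ]
  have hRp : Tendsto (R ∘ p) atTop (𝓝 β) :=
    hRβ ▸ hR.tendsto.comp (tendsto_inv_smul_toReal_floor β)
  have hvp : Tendsto (fun k => B (toReal v) (p k)) atTop (𝓝 (B (toReal v) β)) :=
    ((continuous_const.realForm continuous_id).tendsto β).comp (tendsto_inv_smul_toReal_floor β)
  have hβ0 : β ≠ 0 := by rintro rfl; simp at hvβ
  have hev := (eventually_ne_atTop 0).and ((hvp.eventually_ne hvβ).and (hRp.eventually_ne hβ0))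
  refine mem_closure_of_tendsto hRp (hev.mono fun k ⟨hk, hvpk, hRk⟩ => ?_)
  have hk' : (k : ℝ) ≠ 0 := Nat.cast_ne_zero.mpr hk
  set a : Fin n → ℤ := intForm G (c k) (c k) • v - (2 * intForm G v (c k)) • c k
  have haa : intForm G a a = 0 := by
    simp only [a, map_sub, map_smul, LinearMap.sub_apply, LinearMap.smul_apply, smul_eq_mul, hv,
      (intForm_isSymm hsymm).eq (c k) v]
    ring
  have hc : toReal (c k) = (k : ℝ) • p k := by
    simp only [p, smul_smul, mul_inv_cancel₀ hk', one_smul]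
  have hRa : R (p k) = (-(2 * (k : ℝ) ^ 2 * B (toReal v) (p k)))⁻¹ • toReal a := by
    simp only [a, toReal_sub, toReal_smul, Int.cast_mul, Int.cast_ofNat, ← realForm_toReal, hc,
      map_smul, LinearMap.smul_apply, smul_eq_mul, R]
    match_scalars <;> field_simp <;> ring
  rw [Function.comp_apply, hRa] at hRk ⊢
  obtain ⟨hinv, ha⟩ := smul_ne_zero_iff.mp hRk
  exact smul_toReal_mem_primitiveRays_zero (toReal_eq_zero.not.mp ha) haa hinv

lemma closure_primitiveRays_zero_subset (hsymm : G.IsSymm) (heven : ∀ a, 2 ∣ intForm G a a)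
    (hhyp : ∀ e, IsPrimitive e → intForm G e e = 0 →
      ∃ e', intForm G e' e' = 0 ∧ intForm G e e' = 1)
    {F : Submodule ℝ (Fin n → ℝ)} (hF : (realForm G).IsPosDefOn F) (hF3 : finrank ℝ F = 3)
    (m : ℤ) : closure (primitiveRays G 0) ⊆ closure (primitiveRays G m) := by
  refine closure_minimal ?_ isClosed_closure
  rintro _ ⟨e, he, hee, c, hc, rfl⟩
  rw [mul_zero] at hee
  obtain ⟨e', he', hee'⟩ := hhyp e he hee
  obtain ⟨w, hwe, hwe', hww⟩ := exists_intForm_orthogonal_ne_zero hsymm hF (by omega) hee he' hee'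
  obtain ⟨s, hs⟩ := heven w
  exact smul_mem_closure_primitiveRays (toReal_mem_closure_primitiveRays hsymm hee he' hee' hwe
    hwe' (by rintro rfl; simp_all) hs m) hc

def complexify (x y : Fin n → ℝ) : Fin n → ℂ := fun i => ⟨x i, y i⟩

lemma formC_complexify (x y x' y' : Fin n → ℝ) :
    formC G (complexify x y) (complexify x' y') =
      ⟨realForm G x x' - realForm G y y', realForm G x y' + realForm G y x'⟩ := by
  simp only [formC, ← formR_eq_realForm, formR, dotProduct, Matrix.mulVec, Matrix.map_apply,
    complexify, Complex.ext_iff, Complex.re_sum, Complex.im_sum, Complex.mul_re, Complex.mul_im,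
    Complex.intCast_re, Complex.intCast_im]
  simp only [zero_mul, sub_zero, add_zero, Finset.sum_sub_distrib, Finset.sum_add_distrib,
    and_self]

lemma complexify_re_im (z : Fin n → ℂ) :
    complexify (fun i => (z i).re) (fun i => (z i).im) = z := rfl

lemma complexify_eq_zero {x y : Fin n → ℝ} : complexify x y = 0 ↔ x = 0 ∧ y = 0 := by
  simp [complexify, funext_iff, Complex.ext_iff, forall_and]

lemma star_complexify (x y : Fin n → ℝ) : star (complexify x y) = complexify x (-y) := rfl

lemma complexify_add (x y x' y' : Fin n → ℝ) :
    complexify x y + complexify x' y' = complexify (x + x') (y + y') := rfl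

lemma intCast_eq_complexify (a : Fin n → ℤ) :
    (fun i => (a i : ℂ)) = complexify (toReal a) 0 := by
  funext i
  apply Complex.ext <;> simp [complexify, toReal]

lemma continuous_complexify :
    Continuous fun p : (Fin n → ℝ) × (Fin n → ℝ) => complexify p.1 p.2 := by
  have h : ∀ (x y : Fin n → ℝ) i, complexify x y i = x i + y i * Complex.I := fun x y i => by
    apply Complex.ext <;> simp [complexify]
  exact continuous_pi fun i => by simp only [h]; fun_prop

variable (G) in
def periodCone : Set (Fin n → ℂ) :=
  {z | z ≠ 0 ∧ formC G z z = 0 ∧ 0 < (formC G (z + star z) (z + star z)).re}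

lemma complexify_mem_periodCone_iff (hsymm : G.IsSymm) {x y : Fin n → ℝ} :
    complexify x y ∈ periodCone G ↔ IsPeriodPair (realForm G) x y := by
  have hyx := (realForm_isSymm hsymm).eq y x
  simp only [periodCone, IsPeriodPair, Set.mem_ofPred_eq, star_complexify, complexify_add,
    formC_complexify, Complex.ext_iff, Complex.zero_re, Complex.zero_im, add_neg_cancel,
    map_zero, LinearMap.zero_apply, map_add, LinearMap.add_apply, hyx]
  constructor
  · rintro ⟨-, ⟨h1, h2⟩, h3⟩
    exact ⟨by linarith, by linarith, by linarith⟩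
  · rintro ⟨h1, h2, h3⟩
    refine ⟨fun h0 => ?_, ⟨by linarith, by linarith⟩, by linarith⟩
    simp [(complexify_eq_zero.mp h0).1] at h1

lemma formC_complexify_intCast_eq_zero {x y : Fin n → ℝ} {a : Fin n → ℤ}
    (hx : realForm G x (toReal a) = 0) (hy : realForm G y (toReal a) = 0) :
    formC G (complexify x y) (fun i => (a i : ℂ)) = 0 := by
  simp [intCast_eq_complexify, formC_complexify, hx, hy, Complex.ext_iff]

lemma continuousAt_projAlong {γ β : Fin n → ℝ} (hγ : realForm G γ β ≠ 0) (x : Fin n → ℝ) :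
    ContinuousAt (fun b => projAlong (realForm G) γ b x) β := by
  unfold projAlong
  fun_prop (disch := exact hγ)

lemma continuousAt_partner {x y : Fin n → ℝ} (h : IsPeriodPair (realForm G) x y) :
    ContinuousAt (fun p : (Fin n → ℝ) × (Fin n → ℝ) => partner (realForm G) p.1 p.2) (x, y) := by
  obtain ⟨hxx, hyy, hxy⟩ := h
  unfold partner
  fun_prop (disch := simp [hxx.ne', hxy, hyy])

section Perturbation

variable {x y γ β : Fin n → ℝ}

lemma tendsto_perturb (hxy : IsPeriodPair (realForm G) x y) (hxβ : realForm G x β = 0)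
    (hyβ : realForm G y β = 0) (hγ : realForm G γ β ≠ 0) :
    Tendsto (perturb (realForm G) γ x y) (𝓝 β) (𝓝 (x, y)) := by
  have hx₁β := projAlong_of_apply_eq_zero (B := realForm G) γ hxβ
  have hy₁β := projAlong_of_apply_eq_zero (B := realForm G) γ hyβ
  have hpartner : ContinuousAt (fun b => partner (realForm G) (projAlong (realForm G) γ b x)
      (projAlong (realForm G) γ b y)) β := by
    refine ContinuousAt.comp (g := fun p : (Fin n → ℝ) × (Fin n → ℝ) =>
      partner (realForm G) p.1 p.2) (f := fun b => (projAlong (realForm G) γ b x,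
        projAlong (realForm G) γ b y)) ?_ ((continuousAt_projAlong hγ x).prodMk
        (continuousAt_projAlong hγ y))
    rw [hx₁β, hy₁β]
    exact continuousAt_partner hxy
  have hβ : perturb (realForm G) γ x y β = (x, y) := by
    simp only [perturb, hx₁β, hy₁β, partner_of_isPeriodPair hxy]
  exact hβ ▸ ((continuousAt_projAlong hγ x).prodMk hpartner).tendsto

lemma eventually_perturb_orthogonal (hsymm : G.IsSymm) (hxy : IsPeriodPair (realForm G) x y)
    (hxβ : realForm G x β = 0) (hyβ : realForm G y β = 0) (hγ : realForm G γ β ≠ 0) :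
    ∀ᶠ b in 𝓝 β,
    IsPeriodPair (realForm G) (perturb (realForm G) γ x y b).1
      (perturb (realForm G) γ x y b).2 ∧
    realForm G (perturb (realForm G) γ x y b).1 b = 0 ∧
    realForm G (perturb (realForm G) γ x y b).2 b = 0 := by
  obtain ⟨hxx, hyy, hxy0⟩ := hxy
  set x₁ := fun b => projAlong (realForm G) γ b x
  set y₁ := fun b => projAlong (realForm G) γ b y
  have hx₁ : ContinuousAt x₁ β := continuousAt_projAlong hγ x
  have hy₁ : ContinuousAt y₁ β := continuousAt_projAlong hγ y
  have hx₁β : x₁ β = x := projAlong_of_apply_eq_zero γ hxβ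
  have hy₁β : y₁ β = y := projAlong_of_apply_eq_zero γ hyβ
  have hE : ContinuousAt (fun b => realForm G (y₁ b) (y₁ b) -
      realForm G (x₁ b) (y₁ b) ^ 2 / realForm G (x₁ b) (x₁ b)) β := by
    fun_prop (disch := rw [hx₁β]; exact hxx.ne')
  filter_upwards [(continuousAt_const.realForm continuousAt_id).eventually_ne hγ,
    (hx₁.realForm hx₁).eventually (eventually_gt_nhds (by simpa [hx₁β] using hxx)),
    hE.eventually (eventually_gt_nhds (by simpa [hx₁β, hy₁β, hxy0, hyy] using hxx))]
    with b hγb hAb hEb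
  exact ⟨isPeriodPair_partner (realForm_isSymm hsymm) hAb hEb, projAlong_apply_eq_zero hγb x,
    partner_apply_eq_zero (projAlong_apply_eq_zero hγb x) (projAlong_apply_eq_zero hγb y)⟩

end Perturbation

lemma mem_closure_periodPairs_orthogonal (hsymm : G.IsSymm)
    (hdet : (G.map ((↑) : ℤ → ℝ)).det ≠ 0) {x y β : Fin n → ℝ}
    (hxy : IsPeriodPair (realForm G) x y) (hxβ : realForm G x β = 0)
    (hyβ : realForm G y β = 0) (hβ0 : β ≠ 0) {S : Set (Fin n → ℝ)} (hβS : β ∈ closure S) :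
    (x, y) ∈ closure {p : (Fin n → ℝ) × (Fin n → ℝ) | IsPeriodPair (realForm G) p.1 p.2 ∧
      ∃ b ∈ S, realForm G p.1 b = 0 ∧ realForm G p.2 b = 0} := by
  obtain ⟨γ, hγ⟩ : ∃ γ, realForm G γ β ≠ 0 := by
    by_contra! h
    exact hβ0 ((realForm_nondegenerate hdet).2 β h)
  have := mem_closure_iff_nhdsWithin_neBot.mp hβS
  refine mem_closure_of_tendsto ((tendsto_perturb hxy hxβ hyβ hγ).mono_left
    (nhdsWithin_le_nhds (s := S))) ?_
  filter_upwards [nhdsWithin_le_nhds (eventually_perturb_orthogonal hsymm hxy hxβ hyβ hγ),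
    self_mem_nhdsWithin] with b ⟨hP, hxb, hyb⟩ hbS
  exact ⟨hP, b, hbS, hxb, hyb⟩

variable (G) in
noncomputable def toPeriod (z : periodCone G) : periodDomain G :=
  ⟨Projectivization.mk ℂ z.1 z.2.1, z.1, z.2.1, rfl, z.2.2⟩

lemma continuous_toPeriod : Continuous (toPeriod G) :=
  (continuous_quotient_mk'.comp (continuous_subtype_val.subtype_mk _)).subtype_mk _

lemma surjective_toPeriod : Function.Surjective (toPeriod G) := by
  rintro ⟨_, z, hz, rfl, hzz, hpos⟩
  exact ⟨⟨z, hz, hzz, hpos⟩, rfl⟩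

lemma mem_closure_periodCone_orthogonal (hsymm : G.IsSymm) (hdet : (G.map ((↑) : ℤ → ℝ)).det ≠ 0)
    (heven : ∀ a, 2 ∣ intForm G a a)
    (hhyp : ∀ e, IsPrimitive e → intForm G e e = 0 →
      ∃ e', intForm G e' e' = 0 ∧ intForm G e e' = 1)
    {F : Submodule ℝ (Fin n → ℝ)} (hF : (realForm G).IsPosDefOn F) (hF3 : finrank ℝ F = 3)
    (hmax : ∀ F' : Submodule ℝ (Fin n → ℝ), (realForm G).IsPosDefOn F' → finrank ℝ F' ≤ 3)
    {v : Fin n → ℤ} (hv0 : v ≠ 0) (hv : intForm G v v = 0) (m : ℤ) {z₀ : Fin n → ℂ}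
    (hz₀ : z₀ ∈ periodCone G) :
    z₀ ∈ closure {z | z ∈ periodCone G ∧ ∃ α, IsPrimitive α ∧ intForm G α α = 2 * m ∧
      formC G z (fun i => (α i : ℂ)) = 0} := by
  have hB := realForm_isSymm hsymm
  rw [← complexify_re_im z₀, complexify_mem_periodCone_iff hsymm] at hz₀
  rw [← complexify_re_im z₀]
  obtain ⟨hP, hP2⟩ := isPosDefOn_periodPlane hB hz₀
  obtain ⟨β, hβ, hββ, hvβ⟩ := exists_isotropic_mem_orthogonal_apply_ne_zero hB
    (realForm_nondegenerate hdet) hF (hF3 ▸ hmax) hP (by omega) (toReal_eq_zero.not.mpr hv0)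
    (by rw [realForm_toReal, hv, Int.cast_zero])
  obtain ⟨⟨-, hxβ⟩, hyβ⟩ :=
    (mem_orthogonal_sup_span_singleton.mp hβ).imp_left mem_orthogonal_sup_span_singleton.mp
  have hβ0 : β ≠ 0 := by rintro rfl; simp at hvβ
  have hβS : β ∈ closure (primitiveRays G m) := closure_primitiveRays_zero_subset hsymm heven
    hhyp hF hF3 m (mem_closure_primitiveRays_zero hsymm hv hββ hvβ)
  refine map_mem_closure (f := fun p : (Fin n → ℝ) × (Fin n → ℝ) => complexify p.1 p.2)
    continuous_complexify (mem_closure_periodPairs_orthogonal hsymm hdet hz₀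
    hxβ hyβ hβ0 hβS) ?_
  rintro ⟨x, y⟩ ⟨hxy, _, ⟨α, hα, hαα, c, hc, rfl⟩, hxα, hyα⟩
  simp only [map_smul, smul_eq_mul, mul_eq_zero, hc, false_or] at hxα hyα
  exact ⟨(complexify_mem_periodCone_iff hsymm).mpr hxy, α, hα, hαα,
    formC_complexify_intCast_eq_zero hxα hyα⟩

end PeriodDensity

open PeriodDensity in
theorem stmt9_general (n : ℕ) (G : Matrix (Fin n) (Fin n) ℤ)
    (hsymm : G.IsSymm)
    (heven : ∀ x : Fin n → ℤ, 2 ∣ formZ G x x)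
    (hU : ∃ v v' : Fin n → ℤ, formZ G v v = 0 ∧ formZ G v' v' = 0 ∧ formZ G v v' = 1)
    (hhyp : ∀ v : Fin n → ℤ, IsPrimitive v → formZ G v v = 0 →
      ∃ v' : Fin n → ℤ, formZ G v' v' = 0 ∧ formZ G v v' = 1)
    (hdet : ((G.map ((↑) : ℤ → ℝ))).det ≠ 0)
    (hsig : ∃ F : Submodule ℝ (Fin n → ℝ), Module.finrank ℝ F = 3 ∧
      ∀ x ∈ F, x ≠ 0 → 0 < formR G x x)
    (hmax : ∀ F : Submodule ℝ (Fin n → ℝ),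
      (∀ x ∈ F, x ≠ 0 → 0 < formR G x x) → Module.finrank ℝ F ≤ 3)
    (m : ℤ) :
    Dense {p : periodDomain G |
      ∃ α : Fin n → ℤ, IsPrimitive α ∧ formZ G α α = 2 * m ∧
        ∃ (z : Fin n → ℂ) (hz : z ≠ 0), (p : ℙ ℂ (Fin n → ℂ)) = Projectivization.mk ℂ z hz ∧
          formC G z (fun i => (α i : ℂ)) = 0} := by
  obtain ⟨F, hF3, hF⟩ := hsig
  obtain ⟨v, _, hv, -, hvv'⟩ := hU
  simp only [formR_eq_realForm] at hF hmax
  simp only [formZ_eq_intForm] at heven hhyp hv hvv' ⊢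
  have hv0 : v ≠ 0 := by rintro rfl; simp at hvv'
  have hcone : Dense {z : periodCone G | ∃ α, IsPrimitive α ∧ intForm G α α = 2 * m ∧
      formC G z (fun i => (α i : ℂ)) = 0} :=
    Subtype.dense_iff.mpr fun z hz => by
      simpa [Set.image, and_comm] using
        mem_closure_periodCone_orthogonal hsymm hdet heven hhyp hF hF3 hmax hv0 hv m hz
  refine (surjective_toPeriod.denseRange.dense_image continuous_toPeriod hcone).mono ?_
  rintro _ ⟨z, ⟨α, hα, hαα, hzα⟩, rfl⟩
  exact ⟨α, hα, hαα, z.1, z.2.1, rfl, hzα⟩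

/-- Let `Γ` be an even lattice of signature `(3, b−3)`, `b ≥ 4`, containing a hyperbolic
plane, and such that every primitive isotropic element lies in a hyperbolic-plane
sublattice.  For every `m ∈ ℤ`, the set of periods `[x] ∈ Q` orthogonal to some primitive
`α ∈ Γ` with `α² = 2m` is dense in the period domain `Q`. -/
theorem stmt9 (n : ℕ) (hn : 4 ≤ n) (G : Matrix (Fin n) (Fin n) ℤ)
    (hsymm : G.IsSymm)
    (heven : ∀ x : Fin n → ℤ, 2 ∣ formZ G x x)
    (hU : ∃ v v' : Fin n → ℤ, formZ G v v = 0 ∧ formZ G v' v' = 0 ∧ formZ G v v' = 1)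
    (hhyp : ∀ v : Fin n → ℤ, IsPrimitive v → formZ G v v = 0 →
      ∃ v' : Fin n → ℤ, formZ G v' v' = 0 ∧ formZ G v v' = 1)
    (hdet : ((G.map ((↑) : ℤ → ℝ))).det ≠ 0)
    (hsig : ∃ F : Submodule ℝ (Fin n → ℝ), Module.finrank ℝ F = 3 ∧
      ∀ x ∈ F, x ≠ 0 → 0 < formR G x x)
    (hmax : ∀ F : Submodule ℝ (Fin n → ℝ),
      (∀ x ∈ F, x ≠ 0 → 0 < formR G x x) → Module.finrank ℝ F ≤ 3)
    (m : ℤ) :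
    Dense {p : periodDomain G |
      ∃ α : Fin n → ℤ, IsPrimitive α ∧ formZ G α α = 2 * m ∧
        ∃ (z : Fin n → ℂ) (hz : z ≠ 0), (p : ℙ ℂ (Fin n → ℂ)) = Projectivization.mk ℂ z hz ∧
          formC G z (fun i => (α i : ℂ)) = 0} :=
  stmt9_general n G hsymm heven hU hhyp hdet hsig hmax m
end

section
/- Let Γ be an even unimodular lattice of signature (3,19) (e.g. the K3 lattice 2(−E₈) ⊕ 3U). Call a point [x] of the period domain Q of Γ_ℝ an exceptional Kummer point if the plane W_x = span_ℝ(Re x, Im x) ⊂ Γ_ℝ is spanned by two vectors lying in the image of Γ ⊗ ℚ in Γ_ℝ, and every γ ∈ Γ whose image in Γ_ℝ lies in W_x satisfies γ² ≡ 0 (mod 4). Then the set of exceptional Kummer points is dense in Q. -/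
open Matrix
open scoped LinearAlgebra.Projectivization

/-- `W_x = span_ℝ(Re x, Im x) ⊂ Γ_ℝ` for `x ∈ (Γ_ℝ)_ℂ`. -/
noncomputable def planeOf {n : ℕ} (z : Fin n → ℂ) : Submodule ℝ (Fin n → ℝ) :=
  Submodule.span ℝ {(fun i => (z i).re), (fun i => (z i).im)}

/-- `[x] ∈ Q` is an exceptional Kummer point: `W_x` is spanned by two vectors in the image
of `Γ ⊗ ℚ`, and every `γ ∈ Γ` whose image lies in `W_x` satisfies `γ² ≡ 0 (mod 4)`. -/
def IsExceptionalKummer {n : ℕ} (G : Matrix (Fin n) (Fin n) ℤ)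
    (p : ℙ ℂ (Fin n → ℂ)) : Prop :=
  ∃ (z : Fin n → ℂ) (hz : z ≠ 0), p = Projectivization.mk ℂ z hz ∧
    (∃ a c : Fin n → ℚ,
      planeOf z = Submodule.span ℝ {(fun i => ((a i : ℝ))), (fun i => ((c i : ℝ)))}) ∧
    ∀ γ : Fin n → ℤ, (fun i => (γ i : ℝ)) ∈ planeOf z → (4 : ℤ) ∣ formZ G γ γ

/-! Reduced mod 2, `x ↦ x² / 2` is a quadratic form on `Γ / 2Γ` whose polar form is the
reduction of `⟨·,·⟩`. Lift a totally singular plane of it to lattice vectors `u, v` with an odd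
`2 × 2` minor: by Cramer's rule every lattice vector in the real span of `u, v` is, up to an odd
factor, an integral combination of `u` and `v`, hence has square `≡ 0 mod 4`. Such a plane exists
in rank `≥ 8`: among the seven nonzero `0/1`-combinations of three vectors that are independent
mod 2, one is singular. These conditions only see `u, v` mod 2, so `(u + 2w) / k` and
`(v + 2w') / k` can approximate the real and imaginary parts of any period; a Gram–Schmidt
correction inside the same rational plane then produces periods, which are exceptional Kummer
points converging to the given one. -/

open Filter Topology

section Forms

variable {n : ℕ} {G : Matrix (Fin n) (Fin n) ℤ}

lemma formZ_add_left (x x' y : Fin n → ℤ) : formZ G (x + x') y = formZ G x y + formZ G x' y :=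
  add_dotProduct _ _ _

lemma formZ_add_right (x y y' : Fin n → ℤ) : formZ G x (y + y') = formZ G x y + formZ G x y' := by
  simp only [formZ, mulVec_add, dotProduct_add]

lemma formZ_smul_left (c : ℤ) (x y : Fin n → ℤ) : formZ G (c • x) y = c * formZ G x y :=
  smul_dotProduct _ _ _

lemma formZ_smul_right (c : ℤ) (x y : Fin n → ℤ) : formZ G x (c • y) = c * formZ G x y := by
  simp only [formZ, mulVec_smul, dotProduct_smul, smul_eq_mul]

lemma formZ_comm (hG : G.IsSymm) (x y : Fin n → ℤ) : formZ G x y = formZ G y x := by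
  rw [formZ, formZ, ← dotProduct_transpose_mulVec, hG.eq]

lemma formR_smul_left (c : ℝ) (x y : Fin n → ℝ) : formR G (c • x) y = c * formR G x y :=
  smul_dotProduct _ _ _

lemma formR_smul_right (c : ℝ) (x y : Fin n → ℝ) : formR G x (c • y) = c * formR G x y := by
  simp only [formR, mulVec_smul, dotProduct_smul, smul_eq_mul]

lemma formR_sub_right (x y y' : Fin n → ℝ) : formR G x (y - y') = formR G x y - formR G x y' := by
  simp only [formR, mulVec_sub, dotProduct_sub]

lemma formR_zero_left (y : Fin n → ℝ) : formR G 0 y = 0 := zero_dotProduct _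

lemma formR_comm (hG : G.IsSymm) (x y : Fin n → ℝ) : formR G x y = formR G y x := by
  rw [formR, formR, ← dotProduct_transpose_mulVec, (hG.map _).eq]

lemma continuous_formR : Continuous fun p : (Fin n → ℝ) × (Fin n → ℝ) => formR G p.1 p.2 := by
  unfold formR; fun_prop

lemma formC_re (z w : Fin n → ℂ) :
    (formC G z w).re = formR G (fun t => (z t).re) (fun t => (w t).re)
      - formR G (fun t => (z t).im) (fun t => (w t).im) := by
  simp [formC, formR, dotProduct, mulVec, Complex.re_sum, Finset.mul_sum, ← Finset.sum_sub_distrib]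

lemma formC_im (z w : Fin n → ℂ) :
    (formC G z w).im = formR G (fun t => (z t).re) (fun t => (w t).im)
      + formR G (fun t => (z t).im) (fun t => (w t).re) := by
  simp [formC, formR, dotProduct, mulVec, Complex.im_sum, Finset.mul_sum, ← Finset.sum_add_distrib]

end Forms

section ModTwo

variable {n : ℕ} {G : Matrix (Fin n) (Fin n) ℤ}

/- If all seven squares were `≡ 2 mod 4`, the pairings of `x, y, w` would all be odd, and then
`(x + y + w)² ≡ 2 + 2 + 2 + 2 · 3 ≡ 0 mod 4`. -/
lemma exists_four_dvd_formZ_comb (hG : G.IsSymm) (heven : ∀ x, 2 ∣ formZ G x x)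
    (x y w : Fin n → ℤ) :
    ∃ a b c : ℤ, (¬ 2 ∣ a ∨ ¬ 2 ∣ b ∨ ¬ 2 ∣ c) ∧
      4 ∣ formZ G (a • x + b • y + c • w) (a • x + b • y + c • w) := by
  by_contra! h
  have h₁ := h 1 0 0 (by decide)
  have h₂ := h 0 1 0 (by decide)
  have h₃ := h 0 0 1 (by decide)
  have h₁₂ := h 1 1 0 (by decide)
  have h₁₃ := h 1 0 1 (by decide)
  have h₂₃ := h 0 1 1 (by decide)
  have h₁₂₃ := h 1 1 1 (by decide)
  simp only [one_smul, zero_smul, add_zero, zero_add, formZ_add_left, formZ_add_right,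
    formZ_comm hG y x, formZ_comm hG w x, formZ_comm hG w y] at h₁ h₂ h₃ h₁₂ h₁₃ h₂₃ h₁₂₃
  have := heven x
  have := heven y
  have := heven w
  omega

lemma exists_three_ne_notMem (s : Finset (Fin n)) (hs : s.card + 3 ≤ n) :
    ∃ i j k, i ≠ j ∧ i ≠ k ∧ j ≠ k ∧ i ∉ s ∧ j ∉ s ∧ k ∉ s := by
  have : 2 < (Finset.univ \ s).card := by
    rw [Finset.card_univ_sdiff, Fintype.card_fin]; omega
  obtain ⟨i, hi, j, hj, k, hk, hij, hik, hjk⟩ := Finset.two_lt_card.mp this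
  simp only [Finset.mem_sdiff, Finset.mem_univ, true_and] at hi hj hk
  exact ⟨i, j, k, hij, hik, hjk, hi, hj, hk⟩

lemma exists_four_dvd_formZ_self (hG : G.IsSymm) (heven : ∀ x, 2 ∣ formZ G x x)
    (f : Fin n → ℤ) (s : Finset (Fin n)) (hs : s.card + 4 ≤ n) :
    ∃ v : Fin n → ℤ, 4 ∣ formZ G v v ∧ 2 ∣ formZ G f v ∧ (∃ j ∉ s, ¬ 2 ∣ v j) ∧
      ∃ t : Finset (Fin n), t.card ≤ 4 ∧ ∀ i ∉ t, v i = 0 := by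
  set φ : Fin n → ℤ := fun j => formZ G f (Pi.single j 1)
  -- `m` is a coordinate with `φ m` odd if there is one; then each `eⱼ + φ j • eₘ` pairs evenly
  -- with `f`.
  obtain ⟨m, hm⟩ : ∃ m, ∀ j, 2 ∣ φ j * (1 + φ m) := by
    by_cases h : ∀ j, 2 ∣ φ j
    · exact ⟨⟨0, by omega⟩, fun j => (h j).mul_right _⟩
    · obtain ⟨m, hm⟩ := not_forall.mp h
      exact ⟨m, fun j => (show 2 ∣ 1 + φ m by omega).mul_left _⟩
  obtain ⟨j₁, j₂, j₃, h₁₂, h₁₃, h₂₃, hj₁, hj₂, hj₃⟩ :=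
    exists_three_ne_notMem (insert m s) (by grw [Finset.card_insert_le]; omega)
  simp only [Finset.mem_insert, not_or] at hj₁ hj₂ hj₃
  let y : Fin n → Fin n → ℤ := fun j => Pi.single j 1 + φ j • Pi.single m 1
  have hy : ∀ j, 2 ∣ formZ G f (y j) := fun j => by
    simpa only [y, formZ_add_right, formZ_smul_right, mul_add, mul_one] using hm j
  obtain ⟨a, b, c, habc, hv⟩ := exists_four_dvd_formZ_comb hG heven (y j₁) (y j₂) (y j₃)
  refine ⟨_, hv, ?_, ?_, {j₁, j₂, j₃, m}, Finset.card_le_four, ?_⟩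
  · simp only [formZ_add_right, formZ_smul_right]
    exact dvd_add (dvd_add ((hy _).mul_left _) ((hy _).mul_left _)) ((hy _).mul_left _)
  · rcases habc with h | h | h
    · exact ⟨j₁, hj₁.2, by simpa [y, Pi.single_apply, h₁₂, h₁₃, hj₁.1, h₁₂.symm, h₁₃.symm] using h⟩
    · exact ⟨j₂, hj₂.2, by simpa [y, Pi.single_apply, h₁₂, h₂₃, hj₂.1, h₁₂.symm, h₂₃.symm] using h⟩
    · exact ⟨j₃, hj₃.2, by simpa [y, Pi.single_apply, h₁₃, h₂₃, hj₃.1, h₁₃.symm, h₂₃.symm] using h⟩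
  · intro i hi
    simp only [Finset.mem_insert, Finset.mem_singleton, not_or] at hi
    simp [y, hi.1, hi.2.1, hi.2.2.1, hi.2.2.2]

end ModTwo

section KummerPair

variable {n : ℕ} {G : Matrix (Fin n) (Fin n) ℤ} {u v : Fin n → ℤ}

/-- `u` and `v` are independent modulo 2 (some 2 × 2 minor is odd) and span a totally singular
plane for the quadratic form `x ↦ x² / 2 mod 2`. -/
def IsKummerPair (G : Matrix (Fin n) (Fin n) ℤ) (u v : Fin n → ℤ) : Prop :=
  4 ∣ formZ G u u ∧ 4 ∣ formZ G v v ∧ 2 ∣ formZ G u v ∧ ∃ i j, ¬ 2 ∣ u i * v j - u j * v i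

lemma exists_isKummerPair (hG : G.IsSymm) (heven : ∀ x, 2 ∣ formZ G x x) (hn : 8 ≤ n) :
    ∃ u v, IsKummerPair G u v := by
  obtain ⟨e, he, -, ⟨i, -, hi⟩, t, ht, het⟩ :=
    exists_four_dvd_formZ_self hG heven 0 ∅ (by simp only [Finset.card_empty]; omega)
  obtain ⟨g, hg, heg, ⟨j, hjt, hj⟩, -⟩ := exists_four_dvd_formZ_self hG heven e t (by omega)
  refine ⟨e, g, he, hg, heg, i, j, ?_⟩
  rw [het j hjt, zero_mul, sub_zero, Int.prime_two.dvd_mul]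
  tauto

lemma IsKummerPair.add_two_smul (hG : G.IsSymm) (h : IsKummerPair G u v) (w w' : Fin n → ℤ) :
    IsKummerPair G (u + (2 : ℤ) • w) (v + (2 : ℤ) • w') := by
  obtain ⟨hu, hv, huv, i, j, hij⟩ := h
  refine ⟨?_, ?_, ?_, i, j, ?_⟩
  · simp only [formZ_add_left, formZ_add_right, formZ_smul_left, formZ_smul_right,
      formZ_comm hG w u]
    omega
  · simp only [formZ_add_left, formZ_add_right, formZ_smul_left, formZ_smul_right,
      formZ_comm hG w' v]
    omega
  · simp only [formZ_add_left, formZ_add_right, formZ_smul_left, formZ_smul_right]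
    omega
  · have : (u + (2 : ℤ) • w) i * (v + (2 : ℤ) • w') j
          - (u + (2 : ℤ) • w) j * (v + (2 : ℤ) • w') i
        = u i * v j - u j * v i + 2 * (u i * w' j + w i * v j + 2 * w i * w' j
          - u j * w' i - w j * v i - 2 * w j * w' i) := by
      simp only [Pi.add_apply, Pi.smul_apply, smul_eq_mul]; ring
    rw [this]
    omega

lemma IsKummerPair.four_dvd_of_mem_span (hG : G.IsSymm) (h : IsKummerPair G u v) {γ : Fin n → ℤ}
    (hγ : (fun t => (γ t : ℝ)) ∈ Submodule.span ℝ {fun t => (u t : ℝ), fun t => (v t : ℝ)}) :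
    4 ∣ formZ G γ γ := by
  obtain ⟨hu, hv, huv, i, j, hij⟩ := h
  obtain ⟨α, β, hαβ⟩ := Submodule.mem_span_pair.mp hγ
  have hγt : ∀ t, (γ t : ℝ) = α * u t + β * v t := fun t => by simpa using (congrFun hαβ t).symm
  set m := u i * v j - u j * v i
  set A := γ i * v j - γ j * v i
  set B := u i * γ j - u j * γ i
  -- Cramer's rule for the integral vector `γ` in the real span of `u` and `v`
  have hcramer : m • γ = A • u + B • v := by
    funext t
    have : (m * γ t : ℝ) = A * u t + B * v t := by
      simp only [m, A, B]; push_cast; simp only [hγt]; ring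
    simpa using (by exact_mod_cast this : m * γ t = A * u t + B * v t)
  have hsq : m ^ 2 * formZ G γ γ =
      A ^ 2 * formZ G u u + 2 * (A * B) * formZ G u v + B ^ 2 * formZ G v v := by
    have := congrArg (fun x => formZ G x x) hcramer
    simp only [formZ_add_left, formZ_add_right, formZ_smul_left, formZ_smul_right,
      formZ_comm hG v u] at this
    linear_combination this
  have hcop : IsCoprime 4 (m ^ 2) := by
    simpa using ((Int.prime_two.coprime_iff_not_dvd).mpr hij).pow (m := 2) (n := 2)
  refine hcop.dvd_of_dvd_mul_left ?_
  obtain ⟨c, hc⟩ := huv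
  rw [hsq, hc]
  exact dvd_add (dvd_add (hu.mul_left _) ⟨A * B * c, by ring⟩) (hv.mul_left _)

end KummerPair

section PeriodDomain

variable {n : ℕ} {G : Matrix (Fin n) (Fin n) ℤ}

lemma periodCondition_iff (hG : G.IsSymm) (z : Fin n → ℂ) :
    formC G z z = 0 ∧ 0 < (formC G (z + star z) (z + star z)).re ↔
      formR G (fun t => (z t).re) (fun t => (z t).re)
          = formR G (fun t => (z t).im) (fun t => (z t).im) ∧
        formR G (fun t => (z t).re) (fun t => (z t).im) = 0 ∧
        0 < formR G (fun t => (z t).re) (fun t => (z t).re) := by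
  have hre : (fun t => ((z + star z) t).re) = (2 : ℝ) • fun t => (z t).re := by
    funext t; simp [two_mul]
  have him : (fun t => ((z + star z) t).im) = 0 := by
    funext t; simp
  rw [Complex.ext_iff, formC_re, formC_im, formC_re, hre, him, formR_smul_left, formR_smul_right,
    formR_zero_left, formR_comm hG (fun t => (z t).im) (fun t => (z t).re)]
  simp only [Complex.zero_re, Complex.zero_im, sub_zero, sub_eq_zero]
  constructor
  · rintro ⟨⟨h₁, h₂⟩, h₃⟩
    exact ⟨h₁, by linarith, by linarith⟩
  · rintro ⟨h₁, h₂, h₃⟩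
    exact ⟨⟨h₁, by linarith⟩, by positivity⟩

lemma ne_zero_of_formC_add_star_pos {z : Fin n → ℂ}
    (h : 0 < (formC G (z + star z) (z + star z)).re) : z ≠ 0 := by
  rintro rfl
  simp [formC] at h

noncomputable def orthSnd (G : Matrix (Fin n) (Fin n) ℤ) (U V : Fin n → ℝ) : Fin n → ℝ :=
  V - (formR G U V / formR G U U) • U

/-- Gram–Schmidt applied to `(U, V)`, with the first vector rescaled to make the result isotropic. -/
noncomputable def periodVector (G : Matrix (Fin n) (Fin n) ℤ) (U V : Fin n → ℝ) : Fin n → ℂ :=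
  fun t => ⟨(√(formR G (orthSnd G U V) (orthSnd G U V) / formR G U U) • U) t, orthSnd G U V t⟩

lemma formR_orthSnd {U : Fin n → ℝ} (V : Fin n → ℝ) (hU : formR G U U ≠ 0) :
    formR G U (orthSnd G U V) = 0 := by
  rw [orthSnd, formR_sub_right, formR_smul_right, div_mul_cancel₀ _ hU, sub_self]

lemma re_periodVector (U V : Fin n → ℝ) : (fun t => (periodVector G U V t).re)
    = √(formR G (orthSnd G U V) (orthSnd G U V) / formR G U U) • U := rfl

lemma im_periodVector (U V : Fin n → ℝ) :
    (fun t => (periodVector G U V t).im) = orthSnd G U V := rfl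

lemma periodCondition_periodVector (hG : G.IsSymm) {U V : Fin n → ℝ} (hU : 0 < formR G U U)
    (hV : 0 < formR G (orthSnd G U V) (orthSnd G U V)) :
    formC G (periodVector G U V) (periodVector G U V) = 0 ∧
      0 < (formC G (periodVector G U V + star (periodVector G U V))
        (periodVector G U V + star (periodVector G U V))).re := by
  have hsq : √(formR G (orthSnd G U V) (orthSnd G U V) / formR G U U) ^ 2 * formR G U U
      = formR G (orthSnd G U V) (orthSnd G U V) := by
    rw [Real.sq_sqrt (div_pos hV hU).le, div_mul_cancel₀ _ hU.ne']
  rw [periodCondition_iff hG, re_periodVector, im_periodVector]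
  simp only [formR_smul_left, formR_smul_right, formR_orthSnd V hU.ne', mul_zero, ← mul_assoc,
    ← sq, hsq]
  exact ⟨trivial, trivial, hV⟩

lemma planeOf_periodVector {U V : Fin n → ℝ} (hU : 0 < formR G U U)
    (hV : 0 < formR G (orthSnd G U V) (orthSnd G U V)) :
    planeOf (periodVector G U V) = Submodule.span ℝ {U, V} := by
  rw [planeOf, re_periodVector, im_periodVector]
  set r := √(formR G (orthSnd G U V) (orthSnd G U V) / formR G U U)
  have hr : r ≠ 0 := (Real.sqrt_pos.mpr (div_pos hV hU)).ne'
  apply Submodule.span_eq_span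
  · refine Set.pair_subset (Submodule.mem_span_pair.mpr ?_) (Submodule.mem_span_pair.mpr ?_)
    · exact ⟨r, 0, by simp⟩
    · exact ⟨-(formR G U V / formR G U U), 1, by simp [orthSnd]; module⟩
  · refine Set.pair_subset (Submodule.mem_span_pair.mpr ?_) (Submodule.mem_span_pair.mpr ?_)
    · exact ⟨r⁻¹, 0, by simp [smul_smul, hr]⟩
    · exact ⟨r⁻¹ * (formR G U V / formR G U U), 1,
        by simp [orthSnd, smul_smul, mul_right_comm _ _ r, hr]⟩

lemma Filter.Tendsto.formR (G : Matrix (Fin n) (Fin n) ℤ) {α : Type*} {l : Filter α}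
    {A B : α → Fin n → ℝ} {a b : Fin n → ℝ} (hA : Tendsto A l (𝓝 a)) (hB : Tendsto B l (𝓝 b)) :
    Tendsto (fun k => formR G (A k) (B k)) l (𝓝 (formR G a b)) :=
  (continuous_formR.tendsto (a, b)).comp (hA.prodMk_nhds hB)

variable {α : Type*} {l : Filter α} {U V : α → Fin n → ℝ} {x y : Fin n → ℝ}

lemma tendsto_orthSnd (hU : Tendsto U l (𝓝 x)) (hV : Tendsto V l (𝓝 y))
    (horth : formR G x y = 0) (hx : formR G x x ≠ 0) :
    Tendsto (fun k => orthSnd G (U k) (V k)) l (𝓝 y) := by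
  simpa [orthSnd, horth] using hV.sub (((hU.formR G hV).div (hU.formR G hU) hx).smul hU)

lemma tendsto_periodVector {z : Fin n → ℂ}
    (hU : Tendsto U l (𝓝 fun t => (z t).re)) (hV : Tendsto V l (𝓝 fun t => (z t).im))
    (hsq : formR G (fun t => (z t).re) (fun t => (z t).re)
      = formR G (fun t => (z t).im) (fun t => (z t).im))
    (horth : formR G (fun t => (z t).re) (fun t => (z t).im) = 0)
    (hpos : formR G (fun t => (z t).re) (fun t => (z t).re) ≠ 0) :
    Tendsto (fun k => periodVector G (U k) (V k)) l (𝓝 z) := by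
  have hy := tendsto_orthSnd hU hV horth hpos
  have hr : Tendsto (fun k => √(formR G (orthSnd G (U k) (V k)) (orthSnd G (U k) (V k))
      / formR G (U k) (U k))) l (𝓝 1) := by
    simpa [← hsq, div_self hpos] using ((hy.formR G hy).div (hU.formR G hU) hpos).sqrt
  have hx := tendsto_pi_nhds.mp (by simpa using hr.smul hU)
  exact tendsto_pi_nhds.mpr fun t => (Complex.equivRealProdCLM.symm.continuous.tendsto _).comp
    ((hx t).prodMk_nhds (tendsto_pi_nhds.mp hy t))

end PeriodDomain

lemma exists_tendsto_inv_smul_add_two_smul {ι : Type*} (g : ι → ℤ) (a : ι → ℝ) :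
    ∃ w : ℕ → ι → ℤ,
      Tendsto (fun k : ℕ => (k : ℝ)⁻¹ • fun t => ((g + (2 : ℤ) • w k) t : ℝ)) atTop (𝓝 a) := by
  refine ⟨fun k t => round ((k * a t - g t) / 2), tendsto_pi_nhds.mpr fun t => ?_⟩
  rw [tendsto_iff_norm_sub_tendsto_zero]
  refine squeeze_zero' (Eventually.of_forall fun _ => norm_nonneg _) ?_
    tendsto_inv_atTop_nhds_zero_nat
  filter_upwards [eventually_gt_atTop 0] with k hk
  have hk' : (0 : ℝ) < k := by exact_mod_cast hk
  simp only [Pi.smul_apply, Pi.add_apply, smul_eq_mul, Int.cast_add, Int.cast_mul,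
    Int.cast_ofNat, Real.norm_eq_abs]
  set s := ((k : ℝ) * a t - g t) / 2
  have hdist : (k : ℝ)⁻¹ * (g t + 2 * round s) - a t = (k : ℝ)⁻¹ * (2 * (round s - s)) := by
    simp only [s]; field_simp; ring
  rw [hdist, abs_mul, abs_mul, abs_inv, abs_of_pos hk', abs_two, abs_sub_comm]
  nlinarith [abs_sub_round s, inv_pos.mpr hk']

lemma Projectivization.mk_mem_closure_of_tendsto {K V α : Type*} [DivisionRing K]
    [AddCommGroup V] [Module K V] [TopologicalSpace V] {l : Filter α} [l.NeBot]
    {s : Set (ℙ K V)} {z : α → V} {z₀ : V} (hz₀ : z₀ ≠ 0) (hz : Tendsto z l (𝓝 z₀))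
    (hs : ∀ᶠ k in l, ∃ hk : z k ≠ 0, mk K (z k) hk ∈ s) :
    mk K z₀ hz₀ ∈ closure s := by
  have hπ : Continuous (mk' K : {v : V // v ≠ 0} → ℙ K V) := continuous_quotient_mk'
  refine hπ.closure_preimage_subset s ?_
  rw [Topology.IsInducing.subtypeVal.closure_eq_preimage_closure_image (mk' K ⁻¹' s)]
  exact mem_closure_of_tendsto hz (hs.mono fun k ⟨hk, h⟩ => ⟨⟨z k, hk⟩, h, rfl⟩)

lemma isExceptionalKummer_mk {n : ℕ} {G : Matrix (Fin n) (Fin n) ℤ} {u v : Fin n → ℤ}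
    (hG : G.IsSymm) (h : IsKummerPair G u v) {z : Fin n → ℂ} (hz : z ≠ 0) {c : ℝ} (hc : c ≠ 0)
    (hplane : planeOf z = Submodule.span ℝ {c • fun t => (u t : ℝ), c • fun t => (v t : ℝ)}) :
    IsExceptionalKummer G (Projectivization.mk ℂ z hz) := by
  rw [← Set.image_pair, Set.image_smul, Submodule.span_smul_eq_of_isUnit _ _ hc.isUnit] at hplane
  exact ⟨z, hz, rfl, ⟨fun t => u t, fun t => v t, by simpa using hplane⟩,
    fun γ hγ => h.four_dvd_of_mem_span hG (hplane ▸ hγ)⟩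

theorem stmt12_general (G : Matrix (Fin 22) (Fin 22) ℤ)
    (hsymm : G.IsSymm)
    (heven : ∀ x : Fin 22 → ℤ, 2 ∣ formZ G x x) :
    Dense {p : periodDomain G | IsExceptionalKummer G (p : ℙ ℂ (Fin 22 → ℂ))} := by
  obtain ⟨u, v, huv⟩ := exists_isKummerPair hsymm heven (by norm_num)
  rw [Subtype.dense_iff]
  rintro _ ⟨z, hz, rfl, hQ⟩
  obtain ⟨hsq, horth, hpos⟩ := (periodCondition_iff hsymm z).1 hQ
  obtain ⟨w, hU⟩ := exists_tendsto_inv_smul_add_two_smul u fun t => (z t).re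
  obtain ⟨w', hV⟩ := exists_tendsto_inv_smul_add_two_smul v fun t => (z t).im
  have hy := tendsto_orthSnd hU hV horth hpos.ne'
  refine Projectivization.mk_mem_closure_of_tendsto hz
    (tendsto_periodVector hU hV hsq horth hpos.ne') ?_
  filter_upwards [eventually_ne_atTop 0, (hU.formR G hU).eventually_const_lt hpos,
    (hy.formR G hy).eventually_const_lt (hsq ▸ hpos)] with k hk hUk hyk
  have hQk := periodCondition_periodVector hsymm hUk hyk
  have hzk := ne_zero_of_formC_add_star_pos hQk.2
  exact ⟨hzk, ⟨_, _, hzk, rfl, hQk⟩, isExceptionalKummer_mk hsymm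
    (huv.add_two_smul hsymm (w k) (w' k)) hzk (by positivity) (planeOf_periodVector hUk hyk), rfl⟩

/-- Let `Γ` be an even unimodular lattice of signature `(3,19)` (e.g. the K3 lattice).
The set of exceptional Kummer points is dense in the period domain `Q`. -/
theorem stmt12 (G : Matrix (Fin 22) (Fin 22) ℤ)
    (hsymm : G.IsSymm)
    (heven : ∀ x : Fin 22 → ℤ, 2 ∣ formZ G x x)
    (huni : IsUnit G.det)
    (hsig : ∃ F : Submodule ℝ (Fin 22 → ℝ), Module.finrank ℝ F = 3 ∧
      ∀ x ∈ F, x ≠ 0 → 0 < formR G x x)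
    (hmax : ∀ F : Submodule ℝ (Fin 22 → ℝ),
      (∀ x ∈ F, x ≠ 0 → 0 < formR G x x) → Module.finrank ℝ F ≤ 3) :
    Dense {p : periodDomain G | IsExceptionalKummer G (p : ℙ ℂ (Fin 22 → ℂ))} :=
  stmt12_general G hsymm heven
end
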